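/- Let (R,m) be a Noetherian local ring of characteristic p > 0 and suppose J is an ideal with J^[q₀] ⊆ τ_par(R) for some q₀ = p^{e₀}, where τ_par(R) is the parameter test ideal. Then for every parameter ideal q of R, J · q^* ⊆ q^F. In particular, √(τ_par(R)) annihilates q^*/q^F for every parameter ideal q. -/

import Mathlib

/-!
Definitions of characteristic-`p` notions (Frobenius powers, Frobenius/tight closure,
parameter ideals, F-rationality, F-injectivity, excellence, ...) used to state results
of "A characterization of F-rationality" (products of parameter ideals & tight closure).
-/

open IsLocalRing

universe u

section BasicDefs

variable (A : Type u) [CommRing A] (p : ℕ)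

/-- The Frobenius power `I^[q]` of an ideal: the ideal generated by `q`-th powers
of elements of `I`. -/
def fpow (I : Ideal A) (q : ℕ) : Ideal A :=
  Ideal.span ((fun x => x ^ q) '' (I : Set A))

/-- `A°`: the complement of the union of the minimal primes of `A`. -/
def rcirc : Set A := {c | ∀ P ∈ minimalPrimes A, c ∉ P}

/-- The Frobenius closure `I^F` of an ideal `I` in a ring of characteristic `p`:
elements `x` with `x^(p^e) ∈ I^[p^e]` for all `e ≫ 0`.  (In characteristic `p` the
defining set is already an ideal, so taking the span is harmless.) -/
def fcl (I : Ideal A) : Ideal A :=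
  Ideal.span {x | ∃ N, ∀ e ≥ N, x ^ p ^ e ∈ fpow A I (p ^ e)}

/-- The tight closure `I^*` of an ideal `I` in a ring of characteristic `p`:
elements `x` such that `c * x^(p^e) ∈ I^[p^e]` for some `c ∈ A°` and all `e ≫ 0`. -/
def tcl (I : Ideal A) : Ideal A :=
  Ideal.span {x | ∃ c ∈ rcirc A, ∃ N, ∀ e ≥ N, c * x ^ p ^ e ∈ fpow A I (p ^ e)}

/-- The integral closure of an ideal: elements `x` satisfying an equation
`x^n + a₁ x^(n-1) + ⋯ + a_n = 0` with `aᵢ ∈ Iⁱ`. -/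
def icl (I : Ideal A) : Set A :=
  {x | ∃ n : ℕ, 0 < n ∧ ∃ a : ℕ → A, (∀ i, 1 ≤ i → i ≤ n → a i ∈ I ^ i) ∧
    x ^ n + ∑ i ∈ Finset.Icc 1 n, a i * x ^ (n - i) = 0}

/-- A filter regular element: `(0 :_A x)` has finite length. -/
def IsFilterRegular (x : A) : Prop :=
  IsFiniteLength A ((⊥ : Submodule A A).colon (Ideal.span {x}))

/-- A filter regular sequence: each `x i` is filter regular modulo its predecessors. -/
def IsFilterRegularSeq {t : ℕ} (x : Fin t → A) : Prop :=
  ∀ i : Fin t,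
    IsFilterRegular (A ⧸ Ideal.span (x '' {j | j < i}))
      (Ideal.Quotient.mk (Ideal.span (x '' {j | j < i})) (x i))

/-- An equidimensional ring: `dim A/P = dim A` for every minimal prime `P`. -/
def IsEquidim : Prop :=
  ∀ P ∈ minimalPrimes A, ringKrullDim (A ⧸ P) = ringKrullDim A

/-- A test element: `c ∈ A°` with `c · I^* ⊆ I` for every ideal `I`. -/
def HasTestElement : Prop :=
  ∃ c ∈ rcirc A, ∀ I : Ideal A, ∀ x ∈ tcl A p I, c * x ∈ I

end BasicDefs

section LocalDefs

variable (A : Type u) [CommRing A] [IsLocalRing A] (p : ℕ)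

/-- A (possibly partial) system of parameters of a local ring. -/
def IsSOP {t : ℕ} (x : Fin t → A) : Prop :=
  (∀ i, x i ∈ maximalIdeal A) ∧
    ringKrullDim (A ⧸ Ideal.span (Set.range x)) + (t : WithBot ℕ∞) = ringKrullDim A

/-- A full system of parameters of a local ring. -/
def IsFullSOP {t : ℕ} (x : Fin t → A) : Prop :=
  IsSOP A x ∧ (t : WithBot (WithTop ℕ)) = ringKrullDim A

/-- A parameter ideal: an ideal generated by a (possibly partial) system of parameters. -/
def IsParamIdeal (q : Ideal A) : Prop :=
  ∃ (t : ℕ) (x : Fin t → A), IsSOP A x ∧ q = Ideal.span (Set.range x)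

/-- An ideal generated by a full system of parameters. -/
def IsFullParamIdeal (q : Ideal A) : Prop :=
  ∃ (t : ℕ) (x : Fin t → A), IsFullSOP A x ∧ q = Ideal.span (Set.range x)

/-- F-rationality: every parameter ideal is tightly closed. -/
def FRational : Prop :=
  ∀ q : Ideal A, IsParamIdeal A q → tcl A p q = q

/-- Weak F-regularity: every ideal is tightly closed. -/
def WeaklyFRegular : Prop := ∀ I : Ideal A, tcl A p I = I

/-- The parameter test ideal `τ_par(A) = ⋂_q (q : q^*)`. -/
noncomputable def paramTestIdeal : Ideal A :=
  ⨅ (q : Ideal A) (_ : IsParamIdeal A q), Submodule.colon q (tcl A p q)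

/-- F-rationality on the punctured spectrum. -/
def FRationalOnPunctured : Prop :=
  ∀ (P : Ideal A) [P.IsPrime], P ≠ maximalIdeal A →
    FRational (Localization.AtPrime P) p

/-- Cohen–Macaulay local ring: every full system of parameters is a regular sequence. -/
def IsCMLocal : Prop :=
  ∀ (t : ℕ) (x : Fin t → A), IsFullSOP A x →
    RingTheory.Sequence.IsRegular A (List.ofFn x)

/-- An `m`-primary ideal of a local ring. -/
def IsMPrimary (q : Ideal A) : Prop := q.radical = maximalIdeal A

end LocalDefs

section FInj

variable (A : Type u) [CommRing A] (p : ℕ) [ExpChar A p]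

/-- `A` viewed as a module over itself by restriction of scalars along the Frobenius. -/
def FrobTwist (_p : ℕ) : Type u := A

instance : AddCommGroup (FrobTwist A p) := inferInstanceAs (AddCommGroup A)

noncomputable instance : Module A (FrobTwist A p) := Module.compHom A (frobenius A p)

/-- The Frobenius `x ↦ x^p`, as an `A`-linear map `A → F_* A`. -/
noncomputable def frobHom : A →ₗ[A] FrobTwist A p where
  toFun x := x ^ p
  map_add' x y := add_pow_expChar x y p
  map_smul' r x := by
    show (r * x) ^ p = frobenius A p r * x ^ p
    rw [frobenius_def, mul_pow]

/-- F-injectivity: the map induced by the Frobenius on each local cohomology module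
`H^i_m(A)` is injective. -/
noncomputable def FInjective [IsLocalRing A] : Prop :=
  ∀ i : ℕ, Function.Injective
    ((localCohomology (maximalIdeal A) i).map
      (ModuleCat.ofHom (frobHom A p) :
        ModuleCat.of A A ⟶ ModuleCat.of A (FrobTwist A p)))

end FInj

section Excellence

variable (B : Type u) [CommRing B]

/-- A regular local ring: Noetherian, and the maximal ideal is generated by
`dim B` elements. -/
def IsRegularLocal [IsLocalRing B] : Prop :=
  IsNoetherianRing B ∧ ∃ (t : ℕ) (x : Fin t → B),
    maximalIdeal B = Ideal.span (Set.range x) ∧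
      (t : WithBot (WithTop ℕ)) = ringKrullDim B

/-- A regular ring: all localizations at primes are regular local rings. -/
def IsRegularRing' : Prop :=
  ∀ (P : Ideal B) [P.IsPrime], IsRegularLocal (Localization.AtPrime P)

/-- A saturated chain of primes. -/
def IsSaturatedChain {n : ℕ} (c : Fin (n + 1) → Ideal B) : Prop :=
  StrictMono c ∧ (∀ i, (c i).IsPrime) ∧
    ∀ i : Fin n, ¬∃ r : Ideal B, r.IsPrime ∧ c i.castSucc < r ∧ r < c i.succ

/-- A catenary ring: any two saturated chains of primes with the same endpoints
have the same length. -/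
def IsCatenary : Prop :=
  ∀ (P Q : Ideal B), P.IsPrime → Q.IsPrime → P ≤ Q →
    ∀ (n m : ℕ) (c : Fin (n + 1) → Ideal B) (d : Fin (m + 1) → Ideal B),
      IsSaturatedChain B c → IsSaturatedChain B d →
      c 0 = P → c (Fin.last n) = Q → d 0 = P → d (Fin.last m) = Q → n = m

/-- Universally catenary: every finitely generated `B`-algebra
(i.e. quotient of a polynomial ring over `B`) is catenary. -/
def IsUniversallyCatenary : Prop :=
  ∀ (n : ℕ) (I : Ideal (MvPolynomial (Fin n) B)),
    IsCatenary (MvPolynomial (Fin n) B ⧸ I)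

/-- J-2: the regular locus of every finitely generated `B`-algebra is open. -/
def IsJ2 : Prop :=
  ∀ (n : ℕ) (I : Ideal (MvPolynomial (Fin n) B)),
    IsOpen {P : PrimeSpectrum (MvPolynomial (Fin n) B ⧸ I) |
      IsRegularLocal (Localization.AtPrime P.asIdeal)}

/-- The G-ring (geometrically regular formal fibers) condition for a Noetherian local
ring, via the classical characterization: for every module-finite `B`-algebra `C`
which is a local domain, the generic formal fiber of `C` is regular. -/
def IsGLocal [IsLocalRing B] : Prop :=
  ∀ (C : Type u) [CommRing C] [Algebra B C] [IsLocalRing C] [IsDomain C],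
    Module.Finite B C →
      IsRegularRing' (Localization
        (Submonoid.map (algebraMap C (AdicCompletion (maximalIdeal C) C))
          (nonZeroDivisors C)))

/-- An excellent local ring: Noetherian, geometrically regular formal fibers (G-ring),
J-2, and universally catenary. -/
def IsExcellentLocal [IsLocalRing B] : Prop :=
  IsNoetherianRing B ∧ IsGLocal B ∧ IsJ2 B ∧ IsUniversallyCatenary B

/-- A Cohen–Macaulay ring: all localizations at primes are Cohen–Macaulay local rings. -/
def IsCMRing : Prop :=
  ∀ (P : Ideal B) [P.IsPrime], IsCMLocal (Localization.AtPrime P)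

/-- A homomorphic image of a (Noetherian) Cohen–Macaulay ring. -/
def IsHomImageOfCM : Prop :=
  ∃ (S : Type u) (_ : CommRing S) (f : S →+* B),
    Function.Surjective f ∧ IsNoetherianRing S ∧ IsCMRing S

/-- Locally equidimensional: all localizations at primes are equidimensional. -/
def IsLocallyEquidim : Prop :=
  ∀ (P : Ideal B) [P.IsPrime], IsEquidim (Localization.AtPrime P)

/-- Permutable parameters: for every permutation, the ideal generated by each initial
segment is proper and all of its minimal primes have height equal to the length of
the segment. -/
def ArePermutableParameters {t : ℕ} (x : Fin t → B) : Prop :=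
  ∀ (σ : Equiv.Perm (Fin t)) (i : ℕ), i ≤ t →
    Ideal.span ((fun j => x (σ j)) '' {j : Fin t | (j : ℕ) < i}) ≠ ⊤ ∧
    ∀ (P : Ideal B) [P.IsPrime],
      P ∈ (Ideal.span ((fun j => x (σ j)) '' {j : Fin t | (j : ℕ) < i})).minimalPrimes →
        ringKrullDim (Localization.AtPrime P) = (i : WithBot (WithTop ℕ))

/-- An ideal generated by monomials in the elements `x i`. -/
def GeneratedByMonomialsIn {t : ℕ} (x : Fin t → B) (J : Ideal B) : Prop :=
  ∃ s : Finset (Fin t → ℕ),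
    J = Ideal.span ((fun a : Fin t → ℕ => ∏ i, x i ^ a i) '' (s : Set (Fin t → ℕ)))

end Excellence

section Monomial

variable (p t : ℕ)

/-- An irreducible monomial ideal: generated by pure powers of a subset of the
variables. -/
def IsPurePowerIdeal (I : Ideal (MvPolynomial (Fin t) (ZMod p))) : Prop :=
  ∃ (S : Finset (Fin t)) (a : Fin t → ℕ), (∀ i ∈ S, 1 ≤ a i) ∧
    I = Ideal.span ((fun i => MvPolynomial.X i ^ a i) '' (S : Set (Fin t)))

/-- A monomial ideal of the polynomial ring. -/
def IsMonomialIdeal (I : Ideal (MvPolynomial (Fin t) (ZMod p))) : Prop :=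
  ∃ s : Set (Fin t → ℕ),
    I = Ideal.span ((fun a : Fin t → ℕ => ∏ i, MvPolynomial.X i ^ a i) '' s)

end Monomial

section FrobeniusPower

variable {A : Type u} [CommRing A]

theorem pow_mem_fpow (I : Ideal A) (q : ℕ) {x : A} (hx : x ∈ I) : x ^ q ∈ fpow A I q :=
  Ideal.subset_span ⟨x, hx, rfl⟩

theorem fpow_le (I : Ideal A) {q : ℕ} (hq : q ≠ 0) : fpow A I q ≤ I :=
  Ideal.span_le.mpr <| by
    rintro _ ⟨x, hx, rfl⟩
    exact I.pow_mem_of_mem hx q (Nat.pos_of_ne_zero hq)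

theorem radical_fpow (I : Ideal A) {q : ℕ} (hq : q ≠ 0) : (fpow A I q).radical = I.radical :=
  le_antisymm (Ideal.radical_mono (fpow_le I hq))
    (Ideal.radical_le_radical_iff.mpr fun _ hx => ⟨q, pow_mem_fpow I q hx⟩)

variable (p : ℕ) [ExpChar A p]

theorem fpow_eq_map_iterateFrobenius (I : Ideal A) (e : ℕ) :
    fpow A I (p ^ e) = I.map (iterateFrobenius A p e) :=
  rfl

theorem fpow_span (S : Set A) (e : ℕ) :
    fpow A (Ideal.span S) (p ^ e) = Ideal.span ((· ^ p ^ e) '' S) := by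
  rw [fpow_eq_map_iterateFrobenius, Ideal.map_span]
  rfl

theorem fpow_mul (I K : Ideal A) (e : ℕ) :
    fpow A (I * K) (p ^ e) = fpow A I (p ^ e) * fpow A K (p ^ e) := by
  simp only [fpow_eq_map_iterateFrobenius, Ideal.map_mul]

theorem fpow_fpow (I : Ideal A) (e f : ℕ) :
    fpow A (fpow A I (p ^ e)) (p ^ f) = fpow A I (p ^ (e + f)) := by
  simp only [fpow_eq_map_iterateFrobenius, Ideal.map_map, add_comm e f, iterateFrobenius_add]

end FrobeniusPower

theorem ringKrullDim_quotient_eq_of_radical_eq {A : Type u} [CommRing A] {I K : Ideal A}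
    (h : I.radical = K.radical) : ringKrullDim (A ⧸ I) = ringKrullDim (A ⧸ K) := by
  rw [ringKrullDim_quotient, ringKrullDim_quotient, ← PrimeSpectrum.zeroLocus_radical, h,
    PrimeSpectrum.zeroLocus_radical]

theorem paramTestIdeal_mul_tcl_le {A : Type u} [CommRing A] [IsLocalRing A] (p : ℕ)
    {q : Ideal A} (hq : IsParamIdeal A q) :
    paramTestIdeal A p * tcl A p q ≤ q :=
  Ideal.mul_le.mpr fun _c hc _z hz =>
    Submodule.mem_colon.mp ((iInf₂_le q hq : paramTestIdeal A p ≤ _) hc) _ hz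

section Closures

variable {A : Type u} [CommRing A] (p : ℕ) [ExpChar A p]

theorem isParamIdeal_fpow [IsLocalRing A] {q : Ideal A} (hq : IsParamIdeal A q) (e : ℕ) :
    IsParamIdeal A (fpow A q (p ^ e)) := by
  obtain ⟨t, x, ⟨hmem, hdim⟩, rfl⟩ := hq
  have hp : p ^ e ≠ 0 := pow_ne_zero e (expChar_pos A p).ne'
  have hspan : fpow A (Ideal.span (Set.range x)) (p ^ e) =
      Ideal.span (Set.range (x · ^ p ^ e)) := by
    rw [fpow_span, ← Set.range_comp]
    rfl
  refine ⟨t, (x · ^ p ^ e), ⟨fun i => (maximalIdeal A).pow_mem_of_mem (hmem i) _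
    (Nat.pos_of_ne_zero hp), ?_⟩, hspan⟩
  rw [← hspan, ringKrullDim_quotient_eq_of_radical_eq (radical_fpow _ hp), hdim]

theorem fpow_tcl_le (q : Ideal A) (e : ℕ) :
    fpow A (tcl A p q) (p ^ e) ≤ tcl A p (fpow A q (p ^ e)) := by
  rw [tcl, fpow_span, Ideal.span_le]
  rintro _ ⟨z, ⟨c, hc, N, hN⟩, rfl⟩
  refine Ideal.subset_span ⟨c, hc, N, fun f hf => ?_⟩
  rw [fpow_fpow, ← pow_mul, ← pow_add]
  exact hN (e + f) (hf.trans (Nat.le_add_left f e))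

theorem le_fcl_of_fpow_le {I q : Ideal A} {e : ℕ} (h : fpow A I (p ^ e) ≤ fpow A q (p ^ e)) :
    I ≤ fcl A p q := by
  intro x hx
  refine Ideal.subset_span ⟨e, fun f hf => ?_⟩
  have hx' := pow_mem_fpow _ (p ^ (f - e)) (h (pow_mem_fpow I (p ^ e) hx))
  rwa [fpow_fpow, Nat.add_sub_cancel' hf, ← pow_mul, ← pow_add, Nat.add_sub_cancel' hf] at hx'

theorem mul_tcl_le_fcl [IsLocalRing A] {J : Ideal A} {e₀ : ℕ}
    (hJ : fpow A J (p ^ e₀) ≤ paramTestIdeal A p) {q : Ideal A} (hq : IsParamIdeal A q) :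
    J * tcl A p q ≤ fcl A p q :=
  le_fcl_of_fpow_le p <| calc
    fpow A (J * tcl A p q) (p ^ e₀) = fpow A J (p ^ e₀) * fpow A (tcl A p q) (p ^ e₀) :=
      fpow_mul p J _ e₀
    _ ≤ paramTestIdeal A p * tcl A p (fpow A q (p ^ e₀)) := Ideal.mul_mono hJ (fpow_tcl_le p q e₀)
    _ ≤ fpow A q (p ^ e₀) := paramTestIdeal_mul_tcl_le p (isParamIdeal_fpow p hq e₀)

end Closures

theorem statement_2_general (R : Type u) [CommRing R] [IsLocalRing R]
    (p : ℕ) [Fact p.Prime] [CharP R p]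
    (J : Ideal R) (e₀ : ℕ) (hJ : fpow R J (p ^ e₀) ≤ paramTestIdeal R p) :
    (∀ q : Ideal R, IsParamIdeal R q → J * tcl R p q ≤ fcl R p q) ∧
    (∀ q : Ideal R, IsParamIdeal R q →
      (paramTestIdeal R p).radical * tcl R p q ≤ fcl R p q) := by
  refine ⟨fun q hq => mul_tcl_le_fcl p hJ hq, fun q hq => Ideal.mul_le.mpr fun r hr z hz => ?_⟩
  -- the first part, applied to `J = (r)`: `r ^ n ∈ τ_par` and `n < p ^ n` give `(r)^[p^n] ⊆ τ_par`
  obtain ⟨n, hn⟩ := hr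
  have hspan_le : fpow R (Ideal.span {r}) (p ^ n) ≤ paramTestIdeal R p := by
    rw [fpow_span, Set.image_singleton, Ideal.span_singleton_le_iff_mem]
    exact Ideal.pow_mem_of_pow_mem _ hn (Nat.lt_pow_self (Fact.out : p.Prime).one_lt).le
  exact mul_tcl_le_fcl p hspan_le hq (Ideal.mul_mem_mul (Ideal.mem_span_singleton_self r) hz)

/-- If `J^[q₀] ⊆ τ_par(R)` for some `q₀ = p^{e₀}`, then `J · q^* ⊆ q^F`
for every parameter ideal `q`; in particular `√(τ_par(R))` annihilates `q^*/q^F`. -/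
theorem statement_2 (R : Type u) [CommRing R] [IsLocalRing R] [IsNoetherianRing R]
    (p : ℕ) [Fact p.Prime] [CharP R p]
    (J : Ideal R) (e₀ : ℕ) (hJ : fpow R J (p ^ e₀) ≤ paramTestIdeal R p) :
    (∀ q : Ideal R, IsParamIdeal R q → J * tcl R p q ≤ fcl R p q) ∧
    (∀ q : Ideal R, IsParamIdeal R q →
      (paramTestIdeal R p).radical * tcl R p q ≤ fcl R p q) :=
  statement_2_general R p J e₀ hJ
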